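/- In the braided Hopf algebra $R(\mathcal{D})$ of type $A_n$ (the quotient of the free algebra on $x_1, \dots, x_n$ by the quantum Serre relations, with braiding given by a Cartan datum with $q_{ii} = q$, $q_{ij} q_{ji} = q^{-1}$ for $|i-j| = 1$, and $q_{ij} q_{ji} = 1$ for $|i-j| \geq 2$), the reverse root vector satisfies, for all $1 \leq i < j \leq n+1$: $x_{ji} = (-q)^{j-i-1} \big(\prod_{i \leq k < l < j} q_{lk}\big) \sum_{(i_1, \dots, i_r) \in I_{ij}} (q^{-1} - 1)^{r-2}\, x_{i_1 i_2} x_{i_2 i_3} \cdots x_{i_{r-1} i_r}$, where $I_{ij}$ is the set of chains $i = i_1 < \cdots < i_r = j$, $r \geq 2$. -/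

import Mathlib

/-!
Induct on `j`, using `x_{j+1,i} = [x_j, x_{ji}]_c`. The generator `x_j` braided-commutes with every
root vector `x_{ab}` with `b < j`, and `x_{m,j+1} = [x_{mj}, x_j]_c`; together with
`∏_{m ≤ p < j} q_{jp} q_{pj} = q⁻¹` this gives, for every chain `i = i_1 < ⋯ < i_r = j`,
`x_j x_{i_1 i_2} ⋯ x_{i_{r-1} j} = q (∏_{i ≤ p < j} q_{jp})
  (x_{i_1 i_2} ⋯ x_{i_{r-1} j} x_j - x_{i_1 i_2} ⋯ x_{i_{r-1}, j+1})`.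
So `[x_j, -]_c` maps the chain sum of `(i, j)` to a multiple of that of `(i, j + 1)`: a chain of
`I_{i,j+1}` either avoids `j` and comes from the second term, or passes through `j` and comes from
the first term, its last factor being `x_{j,j+1} = x_j`; this is where the factor `q⁻¹ - 1` arises.
-/

/-- A chain `(i_1, …, i_r) ∈ I_{ij}` is encoded by the finite set `S ⊆ (i, j)` of its
interior entries. -/
def chainList (i j : ℕ) (S : Finset ℕ) : List ℕ := i :: (S.sort (· ≤ ·) ++ [j])

/-- `pairProd f [a_1, …, a_r] = f a_1 a_2 * f a_2 a_3 * ⋯ * f a_{r-1} a_r`. -/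
def pairProd {M : Type*} [Monoid M] (f : ℕ → ℕ → M) : List ℕ → M
  | [] => 1
  | [_] => 1
  | a :: b :: t => f a b * pairProd f (b :: t)

/-- The root vector `x_{il}`: `x_{i,i+1} = x_i` and
`x_{il} = [x_i, x_{i+1,l}]_c = x_i x_{i+1,l} - (q_{i,i+1} ⋯ q_{i,l-1}) • x_{i+1,l} x_i`. -/
def rootVec {k A : Type*} [CommRing k] [Ring A] [Algebra k A]
    (x : ℕ → A) (Q : ℕ → ℕ → k) : ℕ → ℕ → A
  | i, l =>
    if l ≤ i + 1 then x i
    else x i * rootVec x Q (i + 1) l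
      - (∏ p ∈ Finset.Ioo i l, Q i p) • (rootVec x Q (i + 1) l * x i)
  termination_by i l => l - i
  decreasing_by all_goals omega

/-- The reverse root vector `x_{ji}`: `x_{i+1,i} = x_i` and
`x_{ji} = [x_{j-1}, x_{j-1,i}]_c`. -/
def revRootVec {k A : Type*} [CommRing k] [Ring A] [Algebra k A]
    (x : ℕ → A) (Q : ℕ → ℕ → k) : ℕ → ℕ → A
  | j, i =>
    if j ≤ i + 1 then x i
    else x (j - 1) * revRootVec x Q (j - 1) i
      - (∏ p ∈ Finset.Ico i (j - 1), Q (j - 1) p) • (revRootVec x Q (j - 1) i * x (j - 1))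
  termination_by j i => j - i
  decreasing_by all_goals omega

open Finset

section SkewCommutation

variable {k A : Type*} [CommRing k] [Ring A] [Algebra k A]

def qComm (α : k) (u v : A) : A := u * v - α • (v * u)

def SkewCommutes (α : k) (u v : A) : Prop := u * v = α • (v * u)

theorem qComm_smul_right (α c : k) (u v : A) : qComm α u (c • v) = c • qComm α u v := by
  simp only [qComm, mul_smul_comm, smul_mul_assoc, smul_sub, smul_comm α c]

theorem SkewCommutes.mul_right {α β : k} {u v w : A} (hv : SkewCommutes α u v)
    (hw : SkewCommutes β u w) : SkewCommutes (α * β) u (v * w) := by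
  unfold SkewCommutes at *
  rw [← mul_assoc, hv, smul_mul_assoc, mul_assoc, hw, mul_smul_comm, smul_smul, mul_assoc]

theorem SkewCommutes.qComm_right {α β : k} {u v w : A} (γ : k) (hv : SkewCommutes α u v)
    (hw : SkewCommutes β u w) : SkewCommutes (α * β) u (qComm γ v w) := by
  have hvw : u * (v * w) = (α * β) • (v * w * u) := hv.mul_right hw
  have hwv : u * (w * v) = (β * α) • (w * v * u) := hw.mul_right hv
  unfold SkewCommutes qComm
  rw [mul_sub, hvw, mul_smul_comm, hwv, sub_mul, smul_mul_assoc]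
  module

theorem qComm_qComm_of_skewCommutes {γ : k} {u v w : A} (α β : k) (h : SkewCommutes γ u w) :
    qComm (α * γ) u (qComm β v w) = qComm (γ * β) (qComm α u v) w := by
  have huwv : u * w * v = γ • (w * u * v) := by rw [h, smul_mul_assoc]
  have hvuw : v * u * w = γ • (v * w * u) := by rw [mul_assoc, h, mul_smul_comm, ← mul_assoc]
  simp only [qComm, mul_sub, sub_mul, mul_smul_comm, smul_mul_assoc, smul_sub, smul_smul,
    ← mul_assoc, huwv, hvuw]
  module

end SkewCommutation

section RootVectors

variable {k A : Type*} [CommRing k] [Ring A] [Algebra k A] (x : ℕ → A) (Q : ℕ → ℕ → k)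

theorem rootVec_of_le {i l : ℕ} (h : l ≤ i + 1) : rootVec x Q i l = x i := by
  rw [rootVec, if_pos h]

theorem rootVec_of_lt {i l : ℕ} (h : i + 1 < l) :
    rootVec x Q i l = qComm (∏ p ∈ Ioo i l, Q i p) (x i) (rootVec x Q (i + 1) l) := by
  rw [rootVec, if_neg (by omega), qComm]

theorem revRootVec_of_le {j i : ℕ} (h : j ≤ i + 1) : revRootVec x Q j i = x i := by
  rw [revRootVec, if_pos h]

theorem revRootVec_succ {i j : ℕ} (h : i < j) :
    revRootVec x Q (j + 1) i = qComm (∏ p ∈ Ico i j, Q j p) (x j) (revRootVec x Q j i) := by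
  rw [revRootVec, if_neg (by omega), Nat.add_sub_cancel, qComm]

def FarCommute (n : ℕ) : Prop :=
  ∀ a b, 1 ≤ a → a ≤ n → 1 ≤ b → b ≤ n → (a + 2 ≤ b ∨ b + 2 ≤ a) →
    SkewCommutes (Q a b) (x a) (x b)

variable {x Q}

theorem FarCommute.skewCommutes_rootVec {n : ℕ} (hx : FarCommute x Q n) {a b t : ℕ}
    (ha : 1 ≤ a) (hab : a < b) (hbt : b < t) (ht : t ≤ n) :
    SkewCommutes (∏ p ∈ Ico a b, Q t p) (x t) (rootVec x Q a b) := by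
  have hxa : SkewCommutes (Q t a) (x t) (x a) :=
    hx t a (by omega) ht ha (by omega) (Or.inr (by omega))
  rcases Nat.lt_or_ge (a + 1) b with hab' | hba
  · rw [rootVec_of_lt x Q hab', prod_eq_prod_Ico_succ_bot hab]
    exact hxa.qComm_right _ (hx.skewCommutes_rootVec (by omega) hab' hbt ht)
  · obtain rfl : b = a + 1 := by omega
    rwa [rootVec_of_le x Q le_rfl, Nat.Ico_succ_singleton, prod_singleton]
termination_by b - a

theorem FarCommute.rootVec_succ_right {n : ℕ} (hx : FarCommute x Q n) {a b : ℕ}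
    (ha : 1 ≤ a) (hab : a < b) (hb : b ≤ n) :
    rootVec x Q a (b + 1) = qComm (∏ p ∈ Ico a b, Q p b) (rootVec x Q a b) (x b) := by
  have hprod : ∏ p ∈ Ioo a (b + 1), Q a p = (∏ p ∈ Ioo a b, Q a p) * Q a b := by
    rw [Ioo_add_one_right_eq_Ioc, ← Ioo_insert_right hab, prod_insert (by simp), mul_comm]
  rw [rootVec_of_lt x Q (by omega), hprod]
  rcases Nat.lt_or_ge (a + 1) b with hab' | hba
  · rw [hx.rootVec_succ_right (by omega) hab' hb,
      qComm_qComm_of_skewCommutes _ _ (hx a b ha (by omega) (by omega) hb (Or.inl hab')),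
      ← rootVec_of_lt x Q hab', ← prod_eq_prod_Ico_succ_bot hab (fun p => Q p b)]
  · obtain rfl : b = a + 1 := by omega
    simp [rootVec_of_le, Ioo_add_one_right_eq_Ioc]
termination_by b - a

end RootVectors

theorem pairProd_append_pair {M : Type*} [Monoid M] (f : ℕ → ℕ → M) (L : List ℕ) (b c : ℕ) :
    pairProd f (L ++ [b, c]) = pairProd f (L ++ [b]) * f b c := by
  induction L with
  | nil => simp [pairProd]
  | cons a L ih =>
    cases L with
    | nil => simp [pairProd]
    | cons d L => simp only [List.cons_append, pairProd] at ih ⊢; rw [ih, mul_assoc]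

theorem chainList_pairwise {i j : ℕ} {S : Finset ℕ} (hij : i < j) (hS : S ⊆ Ioo i j) :
    (chainList i j S).Pairwise (· < ·) := by
  have hmem : ∀ b ∈ S.sort (· ≤ ·), i < b ∧ b < j := fun b hb =>
    mem_Ioo.1 (hS ((mem_sort _).1 hb))
  refine List.pairwise_cons.2 ⟨fun b hb => ?_, List.pairwise_append.2
    ⟨List.sortedLT_iff_pairwise.1 (sortedLT_sort S), List.pairwise_singleton _ _, ?_⟩⟩
  · rcases List.mem_append.1 hb with hb | hb
    · exact (hmem b hb).1
    · rw [List.mem_singleton.1 hb]; exact hij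
  · intro a ha b hb
    rw [List.mem_singleton.1 hb]
    exact (hmem a ha).2

theorem sort_insert_of_forall_lt {S : Finset ℕ} {j : ℕ} (h : ∀ a ∈ S, a < j) :
    (insert j S).sort (· ≤ ·) = S.sort (· ≤ ·) ++ [j] := by
  have hsorted : (S.sort (· ≤ ·) ++ [j]).Pairwise (· < ·) :=
    List.pairwise_append.2 ⟨List.sortedLT_iff_pairwise.1 (sortedLT_sort S),
      List.pairwise_singleton _ _, fun a ha b hb => by
        rw [List.mem_singleton.1 hb]; exact h a ((mem_sort _).1 ha)⟩
  have htoFinset : (S.sort (· ≤ ·) ++ [j]).toFinset = insert j S := by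
    ext a; simp
  rw [← htoFinset]
  exact (List.toFinset_sort _ hsorted.nodup).2 (hsorted.imp le_of_lt)

section ChainSum

variable {k A : Type*} [CommRing k] [Ring A] [Algebra k A] (x : ℕ → A) (Q : ℕ → ℕ → k)

def chainSum (t : k) (i j : ℕ) : A :=
  ∑ S ∈ (Ioo i j).powerset, t ^ S.card • pairProd (rootVec x Q) (chainList i j S)

theorem chainSum_succ (t : k) {i j : ℕ} (hij : i < j) :
    chainSum x Q t i (j + 1) = ∑ S ∈ (Ioo i j).powerset, t ^ S.card •
      (pairProd (rootVec x Q) (chainList i (j + 1) S)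
        + t • (pairProd (rootVec x Q) (chainList i j S) * x j)) := by
  have hIoo : Ioo i (j + 1) = insert j (Ioo i j) := by
    rw [Ioo_add_one_right_eq_Ioc, Ioo_insert_right hij]
  have hj : j ∉ Ioo i j := by simp
  rw [chainSum, hIoo, sum_powerset_insert hj, ← sum_add_distrib]
  refine sum_congr rfl fun S hS => ?_
  have hSj : ∀ a ∈ S, a < j := fun a ha => (mem_Ioo.1 (mem_powerset.1 hS ha)).2
  have hchain : chainList i (j + 1) (insert j S) = i :: S.sort (· ≤ ·) ++ [j, j + 1] := by
    simp [chainList, sort_insert_of_forall_lt hSj]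
  rw [card_insert_of_notMem fun h => hj (mem_powerset.1 hS h), hchain, pairProd_append_pair,
    rootVec_of_le x Q le_rfl, smul_add, pow_succ, mul_smul]
  rfl

end ChainSum

section TypeABraiding

variable {k A : Type*} [Field k] [Ring A] [Algebra k A]

structure IsTypeABraiding (n : ℕ) (q : k) (Q : ℕ → ℕ → k) : Prop where
  adjacent : ∀ a b, 1 ≤ a → a ≤ n → 1 ≤ b → b ≤ n → (a + 1 = b ∨ b + 1 = a) →
    Q a b * Q b a = q⁻¹
  far : ∀ a b, 1 ≤ a → a ≤ n → 1 ≤ b → b ≤ n → (a + 2 ≤ b ∨ b + 2 ≤ a) → Q a b * Q b a = 1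

variable {x : ℕ → A} {Q : ℕ → ℕ → k} {n : ℕ} {q : k}

theorem IsTypeABraiding.prod_Ico_mul_prod_Ico (hQ : IsTypeABraiding n q Q) {m j : ℕ}
    (hm : 1 ≤ m) (hmj : m < j) (hj : j ≤ n) :
    (∏ p ∈ Ico m j, Q j p) * ∏ p ∈ Ico m j, Q p j = q⁻¹ := by
  obtain ⟨t, rfl⟩ : ∃ t, j = t + 1 := ⟨j - 1, by omega⟩
  have hfar : ∏ p ∈ Ico m t, Q (t + 1) p * Q p (t + 1) = 1 :=
    prod_eq_one fun p hp => by
      rw [mem_Ico] at hp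
      exact hQ.far _ _ (by omega) hj (by omega) (by omega) (Or.inr (by omega))
  rw [← prod_mul_distrib, prod_Ico_succ_top (by omega), hfar, one_mul]
  exact hQ.adjacent _ _ (by omega) hj (by omega) (by omega) (Or.inr rfl)

theorem mul_pairProd_rootVec (hQ : IsTypeABraiding n q Q) (hx : FarCommute x Q n) (hq : q ≠ 0)
    {j : ℕ} (hj : j ≤ n) (L : List ℕ) {a : ℕ} (ha : 1 ≤ a)
    (hL : (a :: (L ++ [j])).Pairwise (· < ·)) :
    x j * pairProd (rootVec x Q) (a :: (L ++ [j]))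
      = (q * ∏ p ∈ Ico a j, Q j p) • (pairProd (rootVec x Q) (a :: (L ++ [j])) * x j
          - pairProd (rootVec x Q) (a :: (L ++ [j + 1]))) := by
  induction L generalizing a with
  | nil =>
    have haj : a < j := List.rel_of_pairwise_cons hL (by simp)
    simp only [List.nil_append, pairProd, mul_one, hx.rootVec_succ_right ha haj hj, qComm,
      sub_sub_cancel, smul_smul, mul_assoc, hQ.prod_Ico_mul_prod_Ico ha haj hj,
      mul_inv_cancel₀ hq, one_smul]
  | cons b L ih =>
    have hab : a < b := List.rel_of_pairwise_cons hL (by simp)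
    have hbj : b < j := List.rel_of_pairwise_cons (List.pairwise_cons.1 hL).2 (by simp)
    have hskew := hx.skewCommutes_rootVec ha hab hbj hj
    simp only [List.cons_append, pairProd] at ih ⊢
    rw [← mul_assoc, hskew, smul_mul_assoc, mul_assoc, ih (by omega) (List.pairwise_cons.1 hL).2,
      mul_smul_comm, smul_smul, mul_sub, ← mul_assoc, ← mul_assoc,
      ← prod_Ico_consecutive _ hab.le hbj.le]
    congr 1
    ring

theorem qComm_chainSum (hQ : IsTypeABraiding n q Q) (hx : FarCommute x Q n) (hq : q ≠ 0)
    {i j : ℕ} (hi : 1 ≤ i) (hij : i < j) (hj : j ≤ n) :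
    qComm (∏ p ∈ Ico i j, Q j p) (x j) (chainSum x Q (q⁻¹ - 1) i j)
      = (-q * ∏ p ∈ Ico i j, Q j p) • chainSum x Q (q⁻¹ - 1) i (j + 1) := by
  rw [chainSum_succ x Q _ hij, chainSum, qComm, mul_sum, sum_mul, smul_sum, smul_sum,
    ← sum_sub_distrib]
  refine sum_congr rfl fun S hS => ?_
  have hS' : x j * pairProd (rootVec x Q) (chainList i j S)
      = (q * ∏ p ∈ Ico i j, Q j p) • (pairProd (rootVec x Q) (chainList i j S) * x j
          - pairProd (rootVec x Q) (chainList i (j + 1) S)) :=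
    mul_pairProd_rootVec hQ hx hq hj _ hi (chainList_pairwise hij (mem_powerset.1 hS))
  rw [mul_smul_comm, smul_mul_assoc, hS']
  match_scalars
  · field_simp
    ring
  · ring

theorem revRootVec_eq_smul_chainSum (hQ : IsTypeABraiding n q Q) (hx : FarCommute x Q n)
    (hq : q ≠ 0) {i j : ℕ} (hi : 1 ≤ i) (hij : i < j) (hj : j ≤ n + 1) :
    revRootVec x Q j i = ((-q) ^ (j - i - 1) * ∏ b ∈ Ioo i j, ∏ a ∈ Ico i b, Q b a) •
      chainSum x Q (q⁻¹ - 1) i j := by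
  induction j, hij using Nat.le_induction with
  | base =>
    simp [revRootVec_of_le, chainSum, chainList, pairProd, rootVec_of_le,
      Ioo_add_one_right_eq_Ioc]
  | succ j hij ih =>
    rw [revRootVec_succ x Q hij, ih (by omega), qComm_smul_right,
      qComm_chainSum hQ hx hq hi hij (by omega), smul_smul, Ioo_add_one_right_eq_Ioc,
      ← Ioo_insert_right hij, prod_insert (by simp), show j + 1 - i - 1 = j - i - 1 + 1 by omega]
    congr 1
    ring

end TypeABraiding

theorem stmt_9_general {k A : Type*} [Field k] [Ring A] [Algebra k A]
    (n N : ℕ) (hN1 : 1 < N)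
    (q : k) (hq : IsPrimitiveRoot q N) (Q : ℕ → ℕ → k)
    (hQ1 : ∀ a b, 1 ≤ a → a ≤ n → 1 ≤ b → b ≤ n → (a + 1 = b ∨ b + 1 = a) →
      Q a b * Q b a = q⁻¹)
    (hQ2 : ∀ a b, 1 ≤ a → a ≤ n → 1 ≤ b → b ≤ n → (a + 2 ≤ b ∨ b + 2 ≤ a) →
      Q a b * Q b a = 1)
    (x : ℕ → A)
    (hSerre2 : ∀ a b, 1 ≤ a → a ≤ n → 1 ≤ b → b ≤ n → (a + 2 ≤ b ∨ b + 2 ≤ a) →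
      x a * x b - Q a b • (x b * x a) = 0)
    (i j : ℕ) (hi : 1 ≤ i) (hij : i < j) (hj : j ≤ n + 1) :
    revRootVec x Q j i
      = ∑ S ∈ (Finset.Ioo i j).powerset,
          ((-q) ^ (j - i - 1) * (∏ b ∈ Finset.Ioo i j, ∏ a ∈ Finset.Ico i b, Q b a) *
            (q⁻¹ - 1) ^ S.card) • pairProd (rootVec x Q) (chainList i j S) := by
  have hx : FarCommute x Q n := fun a b ha han hb hbn hab =>
    sub_eq_zero.1 (hSerre2 a b ha han hb hbn hab)
  rw [revRootVec_eq_smul_chainSum ⟨hQ1, hQ2⟩ hx (hq.ne_zero (by omega)) hi hij hj, chainSum,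
    smul_sum]
  simp only [smul_smul]

/-- In the braided Hopf algebra `R(𝒟)` of type `A_n` (generators
`x_1, …, x_n`, quantum Serre relations, braiding matrix of Cartan type `A_n`), the
reverse root vector satisfies, for all `1 ≤ i < j ≤ n+1`,
`x_{ji} = (-q)^{j-i-1} (∏_{i ≤ k < l < j} q_{lk})
           ∑_{(i_1,…,i_r) ∈ I_{ij}} (q⁻¹-1)^{r-2} x_{i_1 i_2} ⋯ x_{i_{r-1} i_r}`.
(The statement holds in any algebra whose elements `x_1, …, x_n` satisfy the quantum
Serre relations, in particular in `R(𝒟)`.) -/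
theorem stmt_9 {k A : Type*} [Field k] [Ring A] [Algebra k A]
    (n N : ℕ) (hn : 2 ≤ n) (hNodd : Odd N) (hN1 : 1 < N)
    (q : k) (hq : IsPrimitiveRoot q N) (Q : ℕ → ℕ → k)
    (hQdiag : ∀ l, 1 ≤ l → l ≤ n → Q l l = q)
    (hQ1 : ∀ a b, 1 ≤ a → a ≤ n → 1 ≤ b → b ≤ n → (a + 1 = b ∨ b + 1 = a) →
      Q a b * Q b a = q⁻¹)
    (hQ2 : ∀ a b, 1 ≤ a → a ≤ n → 1 ≤ b → b ≤ n → (a + 2 ≤ b ∨ b + 2 ≤ a) →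
      Q a b * Q b a = 1)
    (x : ℕ → A)
    (hSerre1 : ∀ a b, 1 ≤ a → a ≤ n → 1 ≤ b → b ≤ n → (a + 1 = b ∨ b + 1 = a) →
      x a * (x a * x b - Q a b • (x b * x a))
        - (Q a a * Q a b) • ((x a * x b - Q a b • (x b * x a)) * x a) = 0)
    (hSerre2 : ∀ a b, 1 ≤ a → a ≤ n → 1 ≤ b → b ≤ n → (a + 2 ≤ b ∨ b + 2 ≤ a) →
      x a * x b - Q a b • (x b * x a) = 0)
    (i j : ℕ) (hi : 1 ≤ i) (hij : i < j) (hj : j ≤ n + 1) :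
    revRootVec x Q j i
      = ∑ S ∈ (Finset.Ioo i j).powerset,
          ((-q) ^ (j - i - 1) * (∏ b ∈ Finset.Ioo i j, ∏ a ∈ Finset.Ico i b, Q b a) *
            (q⁻¹ - 1) ^ S.card) • pairProd (rootVec x Q) (chainList i j S) :=
  stmt_9_general n N hN1 q hq Q hQ1 hQ2 x hSerre2 i j hi hij hj
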